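/- There exist δ ∈ (0,1) and a function f : ℂ → ℂ complex-differentiable on the open ball B(0,δ), with f(x) ∈ ℝ for every real x ∈ B(0,δ), f(0) = 0, and f'(0) = −4, such that for every z ∈ B(0,δ) with z ∉ [0,∞) one has f(z) ∉ (−∞,0] and f(z)^{1/2} = −(1/2)·φ_→(z). -/

import Mathlib

/-!
For `t > 0` the principal powers factor as `(-tz)^{-1/2} = t^{-1/2} (-z)^{-1/2}`, so
`φ_→(z) = 2z (-z)^{-1/2} H(z)` with `H(z) = ∫₀¹ (1 - tz)^{1/2} t^{-1/2} dt`, which is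
holomorphic near `0` with `H(0) = 2`. With `σ = (-z)^{1/2}` this reads `-(1/2) φ_→(z) = σ H(z)`, so
`f(z) = -z H(z)^2 = (σ H(z))^2` works as soon as `Re (σ H(z)) > 0`.
Since `‖√a - √b‖ ≤ ‖a - b‖` whenever `Re √a + Re √b ≥ 1`, `H` is 1-Lipschitz on the closed
ball of radius `1/2`; as `H` also commutes with conjugation, `|H(z) - 2| ≤ |z|` and
`|Im H(z)| ≤ |Im z| = 2 Re σ |Im σ|`, which keeps `σ H(z)` in the right half-plane
for `|z| < 1/2`.
-/

open Complex Metric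

/-- `φ_→(z) = 2z·∫_0^1 (1−tz)^{1/2}·(−tz)^{−1/2} dt`, the integral of
`2(1−s)^{1/2}(−s)^{−1/2}` over the straight segment from `0` to `z` (principal powers). -/
noncomputable def phiRight (z : ℂ) : ℂ :=
  2 * z *
    ∫ t in (0:ℝ)..1, (1 - (t : ℂ) * z) ^ ((1 : ℂ)/2) * (-((t : ℂ) * z)) ^ (-((1 : ℂ)/2))

open intervalIntegral ComplexConjugate Topology

namespace Complex

lemma cpow_half_mul_self (z : ℂ) : z ^ (1/2 : ℂ) * z ^ (1/2 : ℂ) = z := by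
  rw [← sq, one_div, cpow_ofNat_inv_pow]

lemma re_cpow_half_nonneg (z : ℂ) : 0 ≤ (z ^ (1/2 : ℂ)).re := by
  rw [one_div, cpow_inv_two_re]
  exact Real.sqrt_nonneg _

lemma re_cpow_half_pos {z : ℂ} (hz : z ∈ slitPlane) : 0 < (z ^ (1/2 : ℂ)).re := by
  rw [one_div, cpow_inv_two_re, Real.sqrt_pos]
  rcases mem_slitPlane_iff.1 hz with hre | him
  · linarith [re_le_norm z]
  · linarith [neg_abs_le z.re, abs_re_lt_norm.2 him]

lemma sq_cpow_half {w : ℂ} (hw : 0 < w.re) : (w ^ 2) ^ (1/2 : ℂ) = w := by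
  rw [one_div]
  exact sq_cpow_two_inv hw

lemma sq_mem_slitPlane {w : ℂ} (hw : 0 < w.re) : w ^ 2 ∈ slitPlane := by
  rw [mem_slitPlane_iff, sq, mul_re, mul_im]
  by_cases him : w.im = 0
  · left
    simp only [him, mul_zero, sub_zero]
    positivity
  · right
    rw [show w.re * w.im + w.im * w.re = 2 * w.re * w.im by ring]
    exact mul_ne_zero (by positivity) him

lemma norm_cpow_half_sub_le {a b : ℂ} (h : 1 ≤ (a ^ (1/2 : ℂ)).re + (b ^ (1/2 : ℂ)).re) :
    ‖a ^ (1/2 : ℂ) - b ^ (1/2 : ℂ)‖ ≤ ‖a - b‖ := by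
  have hfac : (a ^ (1/2 : ℂ) - b ^ (1/2 : ℂ)) * (a ^ (1/2 : ℂ) + b ^ (1/2 : ℂ)) = a - b := by
    linear_combination cpow_half_mul_self a - cpow_half_mul_self b
  have hsum : 1 ≤ ‖a ^ (1/2 : ℂ) + b ^ (1/2 : ℂ)‖ :=
    h.trans ((add_re _ _).symm.le.trans (re_le_norm _))
  calc ‖a ^ (1/2 : ℂ) - b ^ (1/2 : ℂ)‖
      ≤ ‖a ^ (1/2 : ℂ) - b ^ (1/2 : ℂ)‖ * ‖a ^ (1/2 : ℂ) + b ^ (1/2 : ℂ)‖ :=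
        le_mul_of_one_le_right (norm_nonneg _) hsum
    _ = ‖a - b‖ := by rw [← norm_mul, hfac]

lemma half_le_re_cpow_half {ζ : ℂ} (h : ‖ζ - 1‖ ≤ 1/2) : 1/2 ≤ (ζ ^ (1/2 : ℂ)).re := by
  have hsqrt := norm_cpow_half_sub_le (a := ζ) (b := 1) (by simpa using re_cpow_half_nonneg ζ)
  rw [one_cpow] at hsqrt
  have hre := (abs_re_le_norm _).trans (hsqrt.trans h)
  rw [sub_re, one_re] at hre
  linarith [neg_abs_le ((ζ ^ (1/2 : ℂ)).re - 1)]

lemma norm_cpow_neg_half_le_two {ζ : ℂ} (h : ‖ζ - 1‖ ≤ 1/2) : ‖ζ ^ (-(1/2 : ℂ))‖ ≤ 2 := by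
  rw [cpow_neg, norm_inv]
  exact inv_le_of_inv_le₀ two_pos
    (by linarith [half_le_re_cpow_half h, re_le_norm (ζ ^ (1/2 : ℂ))])

lemma ofReal_mul_cpow {t : ℝ} (ht : 0 ≤ t) (u c : ℂ) :
    ((t : ℂ) * u) ^ c = (t : ℂ) ^ c * u ^ c := by
  rcases eq_or_ne c 0 with rfl | hc
  · simp
  rcases ht.eq_or_lt with rfl | ht
  · simp [zero_cpow hc]
  rcases eq_or_ne u 0 with rfl | hu
  · simp [zero_cpow hc]
  have ht' : (t : ℂ) ≠ 0 := ofReal_ne_zero.2 ht.ne'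
  rw [cpow_def_of_ne_zero (mul_ne_zero ht' hu), log_ofReal_mul ht hu, add_mul, exp_add,
    ofReal_log ht.le, ← cpow_def_of_ne_zero ht', ← cpow_def_of_ne_zero hu]

lemma ofReal_image_Iic_zero : ofReal '' Set.Iic 0 = slitPlaneᶜ := by
  ext z
  rw [Set.mem_compl_iff, mem_slitPlane_iff]
  constructor
  · rintro ⟨r, hr, rfl⟩
    simpa using hr
  · intro hz
    simp only [not_or, not_lt, not_not] at hz
    exact ⟨z.re, hz.1, ext rfl (by simp [hz.2])⟩

lemma neg_mem_slitPlane_of_notMem_ofReal_image_Ici {z : ℂ} (hz : z ∉ ofReal '' Set.Ici 0) :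
    -z ∈ slitPlane := by
  by_contra h
  rw [← Set.mem_compl_iff, ← ofReal_image_Iic_zero] at h
  obtain ⟨r, hr, hrz⟩ := h
  exact hz ⟨-r, Set.mem_Ici.2 (neg_nonneg.2 hr), by rw [ofReal_neg, hrz, neg_neg]⟩

end Complex

lemma norm_mul_ofReal_cpow_neg_half_le {g : ℂ} {C t : ℝ} (ht : t ∈ Set.Ioc (0:ℝ) 1)
    (hC : 0 ≤ C) (hg : ‖g‖ ≤ C * t) : ‖g * (t : ℂ) ^ (-(1/2 : ℂ))‖ ≤ C := by
  have hsqrt : t * t ^ (-(1/2) : ℝ) = t ^ (1/2 : ℝ) := by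
    calc t * t ^ (-(1/2) : ℝ) = t ^ ((1 : ℝ) + -(1/2)) := by
          rw [Real.rpow_add ht.1, Real.rpow_one]
      _ = t ^ (1/2 : ℝ) := by norm_num
  calc ‖g * (t : ℂ) ^ (-(1/2 : ℂ))‖ = ‖g‖ * t ^ (-(1/2) : ℝ) := by
        rw [norm_mul, norm_cpow_eq_rpow_re_of_pos ht.1]; norm_num
    _ ≤ C * t * t ^ (-(1/2) : ℝ) := mul_le_mul_of_nonneg_right hg (Real.rpow_nonneg ht.1.le _)
    _ = C * t ^ (1/2 : ℝ) := by rw [mul_assoc, hsqrt]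
    _ ≤ C := mul_le_of_le_one_right hC (Real.rpow_le_one ht.1.le ht.2 (by norm_num))

lemma norm_integral_mul_ofReal_cpow_neg_half_le {g : ℝ → ℂ} {C : ℝ}
    (hg : ∀ t ∈ Set.Ioc (0:ℝ) 1, ‖g t‖ ≤ C * t) :
    ‖∫ t in (0:ℝ)..1, g t * (t : ℂ) ^ (-(1/2 : ℂ))‖ ≤ C := by
  have hC : 0 ≤ C := by simpa using (norm_nonneg _).trans (hg 1 ⟨one_pos, le_rfl⟩)
  have hbound : ∀ t ∈ Set.uIoc (0:ℝ) 1, ‖g t * (t : ℂ) ^ (-(1/2 : ℂ))‖ ≤ C := by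
    intro t ht
    rw [Set.uIoc_of_le (zero_le_one' ℝ)] at ht
    exact norm_mul_ofReal_cpow_neg_half_le ht hC (hg t ht)
  simpa using norm_integral_le_of_norm_le_const hbound

lemma norm_one_sub_mul_sub_one_le {t : ℝ} (ht : t ∈ Set.Icc (0:ℝ) 1) (z : ℂ) :
    ‖(1 - (t : ℂ) * z) - 1‖ ≤ ‖z‖ := by
  rw [sub_sub_cancel_left, norm_neg, norm_mul, norm_real, Real.norm_of_nonneg ht.1]
  exact mul_le_of_le_one_left (norm_nonneg z) ht.2

lemma one_sub_mul_mem_slitPlane {t : ℝ} (ht : t ∈ Set.Icc (0:ℝ) 1) {z : ℂ} (hz : ‖z‖ < 1) :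
    1 - (t : ℂ) * z ∈ slitPlane :=
  ball_one_subset_slitPlane <|
    mem_ball_iff_norm.2 ((norm_one_sub_mul_sub_one_le ht z).trans_lt hz)

noncomputable def phiRightRegular (z : ℂ) : ℂ :=
  ∫ t in (0:ℝ)..1, (1 - (t : ℂ) * z) ^ (1/2 : ℂ) * (t : ℂ) ^ (-(1/2 : ℂ))

lemma phiRight_eq (z : ℂ) : phiRight z = 2 * z * ((-z) ^ (-(1/2 : ℂ)) * phiRightRegular z) := by
  rw [phiRight, phiRightRegular, ← integral_const_mul ((-z) ^ (-(1/2 : ℂ)))]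
  congr 1
  refine integral_congr fun t ht => ?_
  rw [Set.uIcc_of_le (zero_le_one' ℝ)] at ht
  simp only [← mul_neg, ofReal_mul_cpow ht.1]
  ring

lemma intervalIntegrable_phiRightRegular_integrand {z : ℂ} (hz : ‖z‖ < 1) :
    IntervalIntegrable (fun t : ℝ => (1 - (t : ℂ) * z) ^ (1/2 : ℂ) * (t : ℂ) ^ (-(1/2 : ℂ)))
      MeasureTheory.volume 0 1 := by
  refine (intervalIntegrable_cpow' (by norm_num)).continuousOn_mul ?_
  refine ContinuousOn.cpow_const (by fun_prop) fun t ht => ?_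
  exact one_sub_mul_mem_slitPlane (Set.uIcc_of_le (zero_le_one' ℝ) ▸ ht) hz

lemma phiRightRegular_zero : phiRightRegular 0 = 2 := by
  simp only [phiRightRegular, mul_zero, sub_zero, one_cpow, one_mul]
  rw [integral_cpow (Or.inl (by norm_num))]
  norm_num

lemma norm_phiRightRegular_sub_le {z w : ℂ} (hz : ‖z‖ ≤ 1/2) (hw : ‖w‖ ≤ 1/2) :
    ‖phiRightRegular z - phiRightRegular w‖ ≤ ‖z - w‖ := by
  rw [phiRightRegular, phiRightRegular, ← integral_sub
    (intervalIntegrable_phiRightRegular_integrand (by linarith))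
    (intervalIntegrable_phiRightRegular_integrand (by linarith))]
  simp_rw [← sub_mul]
  refine norm_integral_mul_ofReal_cpow_neg_half_le fun t ht => ?_
  have ht' : t ∈ Set.Icc (0:ℝ) 1 := Set.Ioc_subset_Icc_self ht
  have hre (x : ℂ) (hx : ‖x‖ ≤ 1/2) : 1/2 ≤ ((1 - (t : ℂ) * x) ^ (1/2 : ℂ)).re :=
    Complex.half_le_re_cpow_half ((norm_one_sub_mul_sub_one_le ht' x).trans hx)
  calc _ ≤ ‖(1 - (t : ℂ) * z) - (1 - (t : ℂ) * w)‖ :=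
        norm_cpow_half_sub_le (by linarith [hre z hz, hre w hw])
    _ = ‖z - w‖ * t := by
        rw [show 1 - (t : ℂ) * z - (1 - t * w) = t * (w - z) by ring, norm_mul, norm_real,
          Real.norm_of_nonneg ht.1.le, norm_sub_rev, mul_comm]

lemma phiRightRegular_conj {z : ℂ} (hz : ‖z‖ < 1) :
    phiRightRegular (conj z) = conj (phiRightRegular z) := by
  rw [phiRightRegular, phiRightRegular, ← intervalIntegral_conj]
  refine integral_congr fun t ht => ?_
  rw [Set.uIcc_of_le (zero_le_one' ℝ)] at ht
  have hconj (x n : ℂ) (hx : x.arg ≠ Real.pi) (hn : conj n = n) :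
      conj (x ^ n) = conj x ^ n := by
    rw [conj_cpow _ _ hx, hn]
  have harg : (1 - (t : ℂ) * z).arg ≠ Real.pi :=
    slitPlane_arg_ne_pi (one_sub_mul_mem_slitPlane ht hz)
  have hargt : (t : ℂ).arg ≠ Real.pi := by
    rw [arg_ofReal_of_nonneg ht.1]
    exact Real.pi_ne_zero.symm
  rw [map_mul, hconj _ _ harg (by simp [map_ofNat]), hconj _ _ hargt (by simp [map_ofNat])]
  simp

lemma abs_im_phiRightRegular_le {z : ℂ} (hz : ‖z‖ ≤ 1/2) :
    |(phiRightRegular z).im| ≤ |z.im| := by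
  have h := norm_phiRightRegular_sub_le hz (w := conj z) (by rwa [norm_conj])
  rw [phiRightRegular_conj (by linarith), sub_conj, sub_conj] at h
  simpa [abs_mul] using h

lemma norm_phiRightRegular_sub_two_le {z : ℂ} (hz : ‖z‖ ≤ 1/2) :
    ‖phiRightRegular z - 2‖ ≤ ‖z‖ := by
  simpa [phiRightRegular_zero] using norm_phiRightRegular_sub_le hz (w := 0) (by simp)

lemma differentiableAt_phiRightRegular {z₀ : ℂ} (hz₀ : ‖z₀‖ < 1/2) :
    DifferentiableAt ℂ phiRightRegular z₀ := by
  have hball : ball (0 : ℂ) (1/2) ∈ 𝓝 z₀ := isOpen_ball.mem_nhds (mem_ball_zero_iff.2 hz₀)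
  have hderiv : ∀ t ∈ Set.uIoc (0:ℝ) 1, ∀ x ∈ ball (0 : ℂ) (1/2), HasDerivAt
      (fun x => (1 - (t : ℂ) * x) ^ (1/2 : ℂ) * (t : ℂ) ^ (-(1/2 : ℂ)))
      ((1/2 : ℂ) * (1 - (t : ℂ) * x) ^ (-(1/2 : ℂ)) * -(t : ℂ) * (t : ℂ) ^ (-(1/2 : ℂ))) x := by
    intro t ht x hx
    rw [Set.uIoc_of_le (zero_le_one' ℝ)] at ht
    have hslit := one_sub_mul_mem_slitPlane (Set.Ioc_subset_Icc_self ht) (z := x)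
      (by linarith [mem_ball_zero_iff.1 hx])
    have hbase := ((hasDerivAt_id' x).const_mul (t : ℂ)).const_sub 1
    have := (hbase.cpow_const (c := 1/2) hslit).mul_const ((t : ℂ) ^ (-(1/2 : ℂ)))
    rwa [show (1/2 : ℂ) - 1 = -(1/2) by norm_num, mul_one] at this
  have hbound : ∀ t ∈ Set.uIoc (0:ℝ) 1, ∀ x ∈ ball (0 : ℂ) (1/2),
      ‖(1/2 : ℂ) * (1 - (t : ℂ) * x) ^ (-(1/2 : ℂ)) * -(t : ℂ) * (t : ℂ) ^ (-(1/2 : ℂ))‖ ≤ 1 := by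
    intro t ht x hx
    rw [Set.uIoc_of_le (zero_le_one' ℝ)] at ht
    refine norm_mul_ofReal_cpow_neg_half_le ht zero_le_one ?_
    have hζ := norm_cpow_neg_half_le_two <|
      (norm_one_sub_mul_sub_one_le (Set.Ioc_subset_Icc_self ht) x).trans (mem_ball_zero_iff.1 hx).le
    rw [norm_mul, norm_mul, norm_neg, norm_real, Real.norm_of_nonneg ht.1.le]
    norm_num
    nlinarith [ht.1]
  exact (hasDerivAt_integral_of_dominated_loc_of_deriv_le (bound := fun _ => 1) hball
    (.of_forall fun x => by fun_prop) (intervalIntegrable_phiRightRegular_integrand (by linarith))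
    (by fun_prop) (.of_forall hbound) intervalIntegrable_const
    (.of_forall hderiv)).2.differentiableAt

lemma neg_half_mul_phiRight {z : ℂ} (hz : z ≠ 0) :
    -(1/2 : ℂ) * phiRight z = (-z) ^ (1/2 : ℂ) * phiRightRegular z := by
  have hs : (-z) ^ (1/2 : ℂ) ≠ 0 := by simp [cpow_eq_zero_iff, hz]
  have hz' : z = -((-z) ^ (1/2 : ℂ) * (-z) ^ (1/2 : ℂ)) := by rw [cpow_half_mul_self, neg_neg]
  rw [phiRight_eq, cpow_neg]
  generalize (-z) ^ (1/2 : ℂ) = s at hs hz'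
  subst hz'
  field_simp

lemma neg_mul_phiRightRegular_sq (z : ℂ) :
    -z * phiRightRegular z ^ 2 = ((-z) ^ (1/2 : ℂ) * phiRightRegular z) ^ 2 := by
  rw [mul_pow, sq ((-z) ^ (1/2 : ℂ)), cpow_half_mul_self]

lemma re_cpow_half_mul_phiRightRegular_pos {z : ℂ} (hz : ‖z‖ < 1/2) (hslit : -z ∈ slitPlane) :
    0 < ((-z) ^ (1/2 : ℂ) * phiRightRegular z).re := by
  set s := (-z) ^ (1/2 : ℂ)
  set H := phiRightRegular z
  have hs : 0 < s.re := re_cpow_half_pos hslit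
  have hss : s * s = -z := cpow_half_mul_self (-z)
  have hHre : 2 - ‖z‖ ≤ H.re := by
    have := (abs_re_le_norm (H - 2)).trans (norm_phiRightRegular_sub_two_le hz.le)
    rw [sub_re, re_ofNat] at this
    linarith [neg_abs_le (H.re - 2)]
  have hHim : s.im * H.im ≤ 2 * s.re * s.im ^ 2 := by
    have hzim : |z.im| = 2 * s.re * |s.im| := by
      rw [← neg_neg z, ← hss, neg_im, abs_neg, mul_im,
          show s.re * s.im + s.im * s.re = 2 * s.re * s.im by ring, abs_mul,
        abs_of_pos (by positivity)]
    calc s.im * H.im ≤ |s.im| * |H.im| := (le_abs_self _).trans (abs_mul _ _).le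
      _ ≤ |s.im| * (2 * s.re * |s.im|) := by
          gcongr
          exact hzim ▸ abs_im_phiRightRegular_le hz.le
      _ = 2 * s.re * s.im ^ 2 := by rw [← sq_abs s.im]; ring
  have hnorm : ‖z‖ = s.re ^ 2 + s.im ^ 2 := by
    rw [← norm_neg, ← hss, norm_mul, ← sq, ← normSq_eq_norm_sq, normSq_apply]; ring
  rw [mul_re]
  nlinarith [mul_le_mul_of_nonneg_left hHre hs.le]

/-- There are `δ ∈ (0,1)` and a function `f` analytic on `B(0,δ)`, real on
real points, with `f(0) = 0`, `f'(0) = −4`, such that off the cut `[0,∞)` the value `f(z)`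
avoids `(−∞,0]` and `f(z)^{1/2} = −(1/2) φ_→(z)`. -/
theorem stmt_5 :
    ∃ δ : ℝ, 0 < δ ∧ δ < 1 ∧
      ∃ f : ℂ → ℂ, DifferentiableOn ℂ f (ball (0 : ℂ) δ) ∧
        (∀ x : ℝ, (x : ℂ) ∈ ball (0 : ℂ) δ → (f x).im = 0) ∧
        f 0 = 0 ∧ deriv f 0 = -4 ∧
        ∀ z ∈ ball (0 : ℂ) δ, z ∉ (Complex.ofReal '' Set.Ici 0) →
          f z ∉ (Complex.ofReal '' Set.Iic 0) ∧
          (f z) ^ ((1 : ℂ)/2) = -(1/2 : ℂ) * phiRight z := by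
  refine ⟨1/2, by norm_num, by norm_num, fun z => -z * phiRightRegular z ^ 2,
    fun z hz => ?_, fun x hx => ?_, by simp, ?_, fun z hz hcut => ?_⟩
  · exact (differentiableAt_id.neg.mul ((differentiableAt_phiRightRegular
      (mem_ball_zero_iff.1 hz)).pow 2)).differentiableWithinAt
  · have hreal : (phiRightRegular x).im = 0 := by
      simpa using abs_im_phiRightRegular_le (z := x) (mem_ball_zero_iff.1 hx).le
    simp [sq, hreal]
  · have hH := (differentiableAt_phiRightRegular (z₀ := 0) (by simp)).hasDerivAt
    rw [((hasDerivAt_neg 0).fun_mul (hH.fun_pow 2)).deriv, phiRightRegular_zero]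
    norm_num
  · have hz' := mem_ball_zero_iff.1 hz
    have hslit := neg_mem_slitPlane_of_notMem_ofReal_image_Ici hcut
    have hpos := re_cpow_half_mul_phiRightRegular_pos hz' hslit
    beta_reduce
    rw [neg_mul_phiRightRegular_sq, ofReal_image_Iic_zero, Set.notMem_compl_iff,
      neg_half_mul_phiRight (neg_ne_zero.1 (slitPlane_ne_zero hslit))]
    exact ⟨sq_mem_slitPlane hpos, sq_cpow_half hpos⟩
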